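/- Let X = 2ℕ = {2, 4, 6, …} be the set of positive even integers. For all n ≥ 1 and s ≥ 0, the number P_{2n,s}^{X} of permutations of {1,…,2n} with exactly s descents whose top is even equals (n!)² · C(n,s)². -/

import Mathlib

open scoped Classical
open Finset

/-- Number of `X,Y`-descents of the word `w = w_1 ⋯ w_n` (indices `i` with
`w_i > w_{i+1}`, `w_i ∈ X`, `w_{i+1} ∈ Y`). -/
noncomputable def desXY (X Y : Set ℕ) {n : ℕ} (w : Fin n → ℕ) : ℕ :=
  (Finset.univ.filter (fun i : Fin n =>
    ∃ h : i.1 + 1 < n, w i > w ⟨i.1 + 1, h⟩ ∧ w i ∈ X ∧ w ⟨i.1 + 1, h⟩ ∈ Y)).card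

/-- `permCount X Y n s` is the number of permutations `σ` of `{1,…,n}` with
exactly `s` `X,Y`-descents. -/
noncomputable def permCount (X Y : Set ℕ) (n s : ℕ) : ℕ :=
  (Finset.univ.filter (fun σ : Equiv.Perm (Fin n) =>
    desXY X Y (fun i => (σ i : ℕ) + 1) = s)).card

/-- `α_{S,n,j} = |{x : j < x ≤ n, x ∉ S}|`. -/
noncomputable def alphaSet (S : Set ℕ) (n j : ℕ) : ℕ :=
  ((Finset.Ioc j n).filter (fun x => x ∉ S)).card

/-- `β_{S,n,j} = |{x : 1 ≤ x < j, x ∉ S}|`. -/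
noncomputable def betaSet (S : Set ℕ) (j : ℕ) : ℕ :=
  ((Finset.Ico 1 j).filter (fun x => x ∉ S)).card

/-!
Insert the largest letter `m + 1` into a permutation of `{1, …, m}`. Every `X`-descent survives
except the one whose bottom letter is pushed aside, and if `m + 1 ∈ X` and the new letter does not
go last, it is the top of one new descent. Counting insertion positions gives
`P_{m+1,s} = (s+1) P_{m,s} + (m+1-s) P_{m,s-1}` if `m + 1 ∈ X` and
`P_{m+1,s} = (m+1-s) P_{m,s} + (s+1) P_{m,s+1}` otherwise. For `X = 2ℕ` the two alternate, and
`P_{2n,s} = (n!)² C(n,s)²`, `P_{2n+1,s} = n! (n+1)! C(n,s) C(n+1,s+1)` follow together by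
induction on `n`, each step being a binomial identity.
-/

section Words

variable (X : Set ℕ)

/-- An `X`-descent `u (i - 1) > u i` of the word `u 0 ⋯ u (n - 1)` is recorded by the index `i` of
its bottom letter: inserting a letter at position `i` is exactly what destroys it. -/
noncomputable def descentSet (n : ℕ) (u : ℕ → ℕ) : Finset ℕ :=
  {i ∈ range n | 0 < i ∧ u i < u (i - 1) ∧ u (i - 1) ∈ X}

def insertAt (p M : ℕ) (u : ℕ → ℕ) (i : ℕ) : ℕ :=
  if i < p then u i else if i = p then M else u (i - 1)

variable {X}

lemma mem_descentSet {n i : ℕ} {u : ℕ → ℕ} :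
    i ∈ descentSet X n u ↔ i < n ∧ 0 < i ∧ u i < u (i - 1) ∧ u (i - 1) ∈ X := by
  simp [descentSet]

lemma card_descentSet_succ (n : ℕ) (u : ℕ → ℕ) :
    #(descentSet X (n + 1) u) = (if 0 < n ∧ u 1 < u 0 ∧ u 0 ∈ X then 1 else 0)
      + #(descentSet X n (fun i => u (i + 1))) := by
  rcases n with _ | n
  · simp [descentSet]
  · simp only [descentSet, card_filter, sum_range_succ' _ (n + 1), sum_range_succ' _ n]
    simp [add_comm]

lemma card_descentSet_insertAt {n p M : ℕ} {u : ℕ → ℕ} (hp : p ≤ n)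
    (hu : ∀ i < n, u i < M) :
    #(descentSet X (n + 1) (insertAt p M u)) + (if p ∈ descentSet X n u then 1 else 0)
      = #(descentSet X n u) + (if p < n ∧ M ∈ X then 1 else 0) := by
  induction p generalizing n u with
  | zero =>
    have htail : (fun i => insertAt 0 M u (i + 1)) = u := by
      funext i; simp [insertAt]
    rw [card_descentSet_succ, htail]
    have := hu 0
    grind [insertAt, mem_descentSet]
  | succ q ih =>
    obtain ⟨k, rfl⟩ : ∃ k, n = k + 1 := ⟨n - 1, by omega⟩
    have htail : (fun i => insertAt (q + 1) M u (i + 1)) = insertAt q M (fun i => u (i + 1)) := by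
      funext i; simp only [insertAt]; split_ifs <;> first | rfl | omega | (congr 1; omega)
    have h0 : insertAt (q + 1) M u 0 = u 0 := by simp [insertAt]
    have h1 : insertAt (q + 1) M u 1 = if q = 0 then M else u 1 := by
      simp only [insertAt]; split_ifs <;> first | rfl | omega
    have := ih (n := k) (u := fun i => u (i + 1)) (by omega) (fun i hi => hu _ (by omega))
    rw [card_descentSet_succ (k + 1), htail, card_descentSet_succ k u, h0, h1]
    simp only [mem_descentSet] at this ⊢
    have := hu 0
    rcases q with _ | q <;> grind

end Words

lemma card_filter_eq_of_add_ite_mem {α : Type*} [DecidableEq α] {S A : Finset α} (hA : A ⊆ S)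
    {f : α → ℕ} {c : ℕ} (hf : ∀ x ∈ S, f x + (if x ∈ A then 1 else 0) = c) (s : ℕ) :
    #{x ∈ S | f x = s} = (if s + 1 = c then #A else 0) + (if s = c then #S - #A else 0) := by
  have key : ∀ x ∈ S, f x = s ↔ (x ∈ A ∧ s + 1 = c) ∨ (x ∉ A ∧ s = c) := by
    intro x hx
    have := hf x hx
    split_ifs at this <;> grind
  by_cases h1 : s + 1 = c
  · rw [if_pos h1, if_neg (by omega), add_zero, filter_congr (q := (· ∈ A))
      (fun x hx => by simp [key x hx, h1, show s ≠ c by omega]), filter_mem_eq_inter,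
      inter_eq_right.mpr hA]
  · by_cases h2 : s = c
    · rw [if_neg h1, if_pos h2, zero_add, ← card_sdiff_of_subset hA]
      congr 1
      ext x
      simp only [mem_filter, mem_sdiff]
      constructor
      · rintro ⟨hx, hfx⟩; exact ⟨hx, by simpa [h1, h2] using (key x hx).mp hfx⟩
      · rintro ⟨hx, hxA⟩; exact ⟨hx, (key x hx).mpr (Or.inr ⟨hxA, h2⟩)⟩
    · rw [if_neg h1, if_neg h2, card_eq_zero, filter_eq_empty_iff]
      intro x hx hfx
      rcases (key x hx).mp hfx with h | h <;> tauto

section Permutations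

open Equiv

def insertMax {m : ℕ} (p : Fin (m + 1)) (τ : Perm (Fin m)) : Perm (Fin (m + 1)) :=
  (finSuccEquiv' p).trans ((optionCongr τ).trans (finSuccEquiv' (Fin.last m)).symm)

variable {m : ℕ}

@[simp]
lemma insertMax_apply_self (p : Fin (m + 1)) (τ : Perm (Fin m)) :
    insertMax p τ p = Fin.last m := by
  simp [insertMax]

@[simp]
lemma insertMax_apply_succAbove (p : Fin (m + 1)) (τ : Perm (Fin m)) (j : Fin m) :
    insertMax p τ (p.succAbove j) = (τ j).castSucc := by
  simp [insertMax, Fin.succAbove_last]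

lemma insertMax_injective :
    Function.Injective fun x : Perm (Fin m) × Fin (m + 1) => insertMax x.2 x.1 := by
  rintro ⟨τ, p⟩ ⟨τ', p'⟩ h
  simp only at h
  obtain rfl : p = p' := by
    apply (insertMax p' τ').injective
    rw [insertMax_apply_self, ← h, insertMax_apply_self]
  refine Prod.ext (Equiv.ext fun j => Fin.castSucc_injective _ ?_) rfl
  rw [← insertMax_apply_succAbove, h, insertMax_apply_succAbove]

variable (m) in
noncomputable def insertMaxEquiv : Perm (Fin m) × Fin (m + 1) ≃ Perm (Fin (m + 1)) :=
  Equiv.ofBijective _ <| (Fintype.bijective_iff_injective_and_card _).mpr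
    ⟨insertMax_injective, by simp [Fintype.card_perm, Nat.factorial_succ, mul_comm]⟩

def permWord (τ : Perm (Fin m)) (i : ℕ) : ℕ :=
  if h : i < m then τ ⟨i, h⟩ + 1 else 0

lemma permWord_insertMax (p : Fin (m + 1)) (τ : Perm (Fin m)) :
    permWord (insertMax p τ) = insertAt p (m + 1) (permWord τ) := by
  funext i
  rcases lt_trichotomy i p with h | rfl | h
  · have hi : insertMax p τ ⟨i, by omega⟩ = (τ ⟨i, by omega⟩).castSucc := by
      rw [← insertMax_apply_succAbove, Fin.succAbove_of_castSucc_lt _ _ h]; rfl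
    simp [permWord, insertAt, h, show i < m by omega, show i < m + 1 by omega, hi]
  · simp [permWord, insertAt, p.is_le]
  · by_cases him : i < m + 1
    · have hi : insertMax p τ ⟨i, him⟩ = (τ ⟨i - 1, by omega⟩).castSucc := by
        rw [← insertMax_apply_succAbove,
          Fin.succAbove_of_le_castSucc p ⟨i - 1, by omega⟩ (by simp [Fin.le_def]; omega)]
        congr 1; exact Fin.ext (by simp; omega)
      simp [permWord, insertAt, h.not_gt, h.ne', him, hi, show i - 1 < m by omega]
    · simp [permWord, insertAt, h.not_gt, h.ne', him, show ¬ i - 1 < m by omega]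

lemma desXY_eq_card_descentSet (X : Set ℕ) (τ : Perm (Fin m)) :
    desXY X Set.univ (fun i => (τ i : ℕ) + 1) = #(descentSet X m (permWord τ)) := by
  apply card_bij (fun i _ => i.val + 1)
  · intro i hi
    simp only [mem_filter, mem_univ, true_and] at hi
    obtain ⟨h, hlt, hX, -⟩ := hi
    simp only [mem_descentSet, permWord, Nat.add_sub_cancel, dif_pos h, dif_pos i.isLt, Fin.eta]
    exact ⟨h, Nat.succ_pos _, hlt, hX⟩
  · intro i _ j _ hij
    exact Fin.ext (by omega)
  · intro k hk
    simp only [mem_descentSet] at hk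
    obtain ⟨hk, hpos, hlt, hX⟩ := hk
    obtain ⟨j, rfl⟩ : ∃ j, k = j + 1 := ⟨k - 1, by omega⟩
    refine ⟨⟨j, by omega⟩, ?_, rfl⟩
    simp only [permWord, hk, show j < m by omega, dif_pos, add_tsub_cancel_right] at hlt hX
    simp only [mem_filter, mem_univ, true_and]
    exact ⟨hk, hlt, hX, trivial⟩

end Permutations

section Recurrences

open Equiv

variable {X : Set ℕ} {m : ℕ}

lemma permWord_lt (τ : Perm (Fin m)) {i : ℕ} (hi : i < m) : permWord τ i < m + 1 := by
  simp [permWord, hi]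

variable (X m) in
lemma permCount_eq_card_descentSet (s : ℕ) :
    permCount X Set.univ m s = #{τ : Perm (Fin m) | #(descentSet X m (permWord τ)) = s} := by
  simp only [permCount, desXY_eq_card_descentSet]

variable (X m) in
lemma sum_ite_card_descentSet (t c : ℕ) :
    ∑ τ : Perm (Fin m), (if #(descentSet X m (permWord τ)) = t then c else 0)
      = c * permCount X Set.univ m t := by
  rw [← sum_filter, sum_const, smul_eq_mul, permCount_eq_card_descentSet, mul_comm]

variable (X m) in
lemma permCount_succ_eq_sum (s : ℕ) :
    permCount X Set.univ (m + 1) s = ∑ τ : Perm (Fin m),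
      #{p ∈ range (m + 1) | #(descentSet X (m + 1) (insertAt p (m + 1) (permWord τ))) = s} := by
  rw [permCount_eq_card_descentSet, card_filter, ← (insertMaxEquiv m).sum_comp,
    Fintype.sum_prod_type]
  refine sum_congr rfl fun τ _ => ?_
  rw [card_filter, ← Fin.sum_univ_eq_sum_range]
  simp [insertMaxEquiv, permWord_insertMax]

lemma card_insertAt_fiber_of_mem (hM : m + 1 ∈ X) (τ : Perm (Fin m)) (s : ℕ) :
    #{p ∈ range (m + 1) | #(descentSet X (m + 1) (insertAt p (m + 1) (permWord τ))) = s}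
      = (if #(descentSet X m (permWord τ)) = s then s + 1 else 0)
        + (if #(descentSet X m (permWord τ)) + 1 = s then m + 1 - s else 0) := by
  have hm : m ∉ descentSet X m (permWord τ) := by simp [mem_descentSet]
  rw [card_filter_eq_of_add_ite_mem (A := insert m (descentSet X m (permWord τ)))
    (c := #(descentSet X m (permWord τ)) + 1) ?_ ?_ s, card_insert_of_notMem hm, card_range]
  · split_ifs <;> omega
  · refine insert_subset_iff.mpr ⟨by simp, fun x hx => ?_⟩
    simp only [mem_descentSet, mem_range] at hx ⊢
    omega
  · intro p hp
    have key := card_descentSet_insertAt (X := X) (u := permWord τ)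
      (Nat.lt_succ_iff.mp (mem_range.mp hp)) (fun i hi => permWord_lt τ hi)
    rcases (by simpa [Nat.lt_succ_iff, le_iff_eq_or_lt] using hp : p = m ∨ p < m) with rfl | hpm
    · simpa [hm] using key
    · simpa [hpm, hpm.ne, hM] using key

lemma card_insertAt_fiber_of_notMem (hM : m + 1 ∉ X) (τ : Perm (Fin m)) (s : ℕ) :
    #{p ∈ range (m + 1) | #(descentSet X (m + 1) (insertAt p (m + 1) (permWord τ))) = s}
      = (if #(descentSet X m (permWord τ)) = s then m + 1 - s else 0)
        + (if #(descentSet X m (permWord τ)) = s + 1 then s + 1 else 0) := by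
  rw [card_filter_eq_of_add_ite_mem (A := descentSet X m (permWord τ))
    (c := #(descentSet X m (permWord τ))) ?_ ?_ s, card_range]
  · split_ifs <;> omega
  · exact fun x hx => by simp [mem_descentSet] at hx ⊢; omega
  · intro p hp
    have key := card_descentSet_insertAt (X := X) (u := permWord τ)
      (Nat.lt_succ_iff.mp (mem_range.mp hp)) (fun i hi => permWord_lt τ hi)
    simpa [hM] using key

theorem permCount_succ_zero_of_mem (hM : m + 1 ∈ X) :
    permCount X Set.univ (m + 1) 0 = permCount X Set.univ m 0 := by
  simp only [permCount_succ_eq_sum, card_insertAt_fiber_of_mem hM, Nat.add_eq_zero_iff,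
    one_ne_zero, and_false, if_false, add_zero, zero_add, sum_ite_card_descentSet, one_mul]

theorem permCount_succ_succ_of_mem (hM : m + 1 ∈ X) (s : ℕ) :
    permCount X Set.univ (m + 1) (s + 1)
      = (s + 2) * permCount X Set.univ m (s + 1) + (m - s) * permCount X Set.univ m s := by
  simp only [permCount_succ_eq_sum, card_insertAt_fiber_of_mem hM, Nat.add_right_cancel_iff,
    Nat.add_sub_add_right, sum_add_distrib, sum_ite_card_descentSet]

theorem permCount_succ_of_notMem (hM : m + 1 ∉ X) (s : ℕ) :
    permCount X Set.univ (m + 1) s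
      = (m + 1 - s) * permCount X Set.univ m s + (s + 1) * permCount X Set.univ m (s + 1) := by
  simp only [permCount_succ_eq_sum, card_insertAt_fiber_of_notMem hM, sum_add_distrib,
    sum_ite_card_descentSet]

end Recurrences

lemma choose_identity_odd (n s : ℕ) :
    (2 * n + 1 - s) * n.choose s ^ 2 + (s + 1) * n.choose (s + 1) ^ 2
      = (n + 1) * n.choose s * (n + 1).choose (s + 1) := by
  rcases le_or_gt s n with hs | hs
  · have h1 := Nat.choose_succ_right_eq n s
    have h2 := Nat.add_one_mul_choose_eq n s
    qify [hs, show s ≤ 2 * n + 1 by omega] at h1 h2 ⊢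
    -- Scaled by (s+1)², both sides become multiples of C(n,s)², and
    -- (2n+1-s)(s+1) + (n-s)² = (n+1)².
    apply mul_right_cancel₀ (show ((s : ℚ) + 1) ^ 2 ≠ 0 by positivity)
    linear_combination (s + 1) * ((n.choose (s + 1) : ℚ) * (s + 1) + n.choose s * (n - s)) * h1
      + (n + 1) * (n.choose s : ℚ) * (s + 1) * h2
  · simp [Nat.choose_eq_zero_of_lt hs, Nat.choose_eq_zero_of_lt (Nat.lt_succ_of_lt hs)]

lemma choose_identity_even (n s : ℕ) :
    (s + 2) * n.choose (s + 1) * (n + 1).choose (s + 2)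
        + (2 * n + 1 - s) * n.choose s * (n + 1).choose (s + 1)
      = (n + 1) * (n + 1).choose (s + 1) ^ 2 := by
  rcases le_or_gt s n with hs | hs
  · have h1 := Nat.choose_succ_right_eq n s
    have h2 := Nat.add_one_mul_choose_eq n s
    have h3 := Nat.add_one_mul_choose_eq n (s + 1)
    qify [hs, show s ≤ 2 * n + 1 by omega] at h1 h2 h3 ⊢
    apply mul_right_cancel₀ (show ((s : ℚ) + 1) ^ 2 ≠ 0 by positivity)
    linear_combination
      (n + 1) * ((n.choose (s + 1) : ℚ) * (s + 1) + n.choose s * (n - s)) * h1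
      + ((n + 1) * (((n + 1).choose (s + 1) : ℚ) * (s + 1) + (n + 1) * n.choose s)
        - (2 * n + 1 - s) * (s + 1) * n.choose s) * h2
      - (s + 1) ^ 2 * (n.choose (s + 1) : ℚ) * h3
  · simp [Nat.choose_eq_zero_of_lt hs, Nat.choose_eq_zero_of_lt (by omega : n + 1 < s + 1),
      Nat.choose_eq_zero_of_lt (by omega : n < s + 1)]

section ClosedForm

open scoped Nat

variable {X : Set ℕ}

theorem permCount_two_mul_add_one {n : ℕ} (hX : 2 * n + 1 ∉ X)
    (h : ∀ s, permCount X Set.univ (2 * n) s = n ! ^ 2 * n.choose s ^ 2) (s : ℕ) :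
    permCount X Set.univ (2 * n + 1) s = n ! * (n + 1)! * n.choose s * (n + 1).choose (s + 1) := by
  rw [permCount_succ_of_notMem hX, h, h]
  calc (2 * n + 1 - s) * (n ! ^ 2 * n.choose s ^ 2) + (s + 1) * (n ! ^ 2 * n.choose (s + 1) ^ 2)
      = n ! ^ 2 * ((2 * n + 1 - s) * n.choose s ^ 2 + (s + 1) * n.choose (s + 1) ^ 2) := by ring
    _ = n ! * (n + 1)! * n.choose s * (n + 1).choose (s + 1) := by
      rw [choose_identity_odd, Nat.factorial_succ]; ring

theorem permCount_two_mul (hodd : ∀ k, 2 * k + 1 ∉ X) (heven : ∀ k, 2 * k + 2 ∈ X)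
    (n s : ℕ) :
    permCount X Set.univ (2 * n) s = n ! ^ 2 * n.choose s ^ 2 := by
  induction n generalizing s with
  | zero => rcases s with _ | s <;> simp [permCount, desXY]
  | succ n ih =>
    have hM : 2 * n + 1 + 1 ∈ X := heven n
    have hP := permCount_two_mul_add_one (hodd n) ih
    rw [show 2 * (n + 1) = 2 * n + 1 + 1 by ring]
    rcases s with _ | s
    · rw [permCount_succ_zero_of_mem hM, hP, Nat.factorial_succ]
      simp only [Nat.choose_zero_right, zero_add, Nat.choose_one_right]
      ring
    · rw [permCount_succ_succ_of_mem hM, hP, hP]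
      calc (s + 2) * (n ! * (n + 1)! * n.choose (s + 1) * (n + 1).choose (s + 1 + 1))
            + (2 * n + 1 - s) * (n ! * (n + 1)! * n.choose s * (n + 1).choose (s + 1))
          = n ! * (n + 1)! * ((s + 2) * n.choose (s + 1) * (n + 1).choose (s + 2)
            + (2 * n + 1 - s) * n.choose s * (n + 1).choose (s + 1)) := by ring
        _ = (n + 1)! ^ 2 * (n + 1).choose (s + 1) ^ 2 := by
          rw [choose_identity_even, Nat.factorial_succ]; ring

end ClosedForm

theorem stmt7_general (n s : ℕ) :
    permCount {x : ℕ | 0 < x ∧ 2 ∣ x} Set.univ (2 * n) s =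
      (Nat.factorial n) ^ 2 * (Nat.choose n s) ^ 2 :=
  permCount_two_mul (X := {x | 0 < x ∧ 2 ∣ x})
    (fun k h => by simp at h) (fun k => by simp) n s

theorem stmt7 (n s : ℕ) (hn : 1 ≤ n) :
    permCount {x : ℕ | 0 < x ∧ 2 ∣ x} Set.univ (2 * n) s =
      (Nat.factorial n) ^ 2 * (Nat.choose n s) ^ 2 :=
  stmt7_general n s
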